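/- arXiv:cond-mat/0603694 — 2 statements merged into one kernel-verified Lean document; each statement's English description precedes it below -/
import Mathlib

section
/- Let X be a finite ultrametric space with positive additive measure ν, tree of balls S with maximal ball K, and T_1, T_2 real-valued functions on non-minimal balls. For two distinct points I, J ∈ S_min with M := sup(I,J), one has Σ_{L ∈ S_min, L ≠ I, L ≠ J} ν(L)·T_1(sup(I,L))·T_2(sup(L,J)) = Σ_{L : M < L ≤ K} (ν(L) − ν(L−1,M))·T_1(L)·T_2(L) + Σ_{L : I < L < M} (ν(L) − ν(L−1,I))·T_1(L)·T_2(M) + Σ_{L : J < L < M} (ν(L) − ν(L−1,J))·T_1(M)·T_2(L) + (ν(M) − ν(M−1,I) − ν(M−1,J))·T_1(M)·T_2(M). -/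
open scoped Classical
open Finset

noncomputable section

variable {X : Type*} [Fintype X] [DecidableEq X]

/-- `d` is an ultrametric on the finite space `X`. -/
def IsUltra (d : X → X → ℝ) : Prop :=
  (∀ x y, 0 ≤ d x y) ∧ (∀ x y, d x y = 0 ↔ x = y) ∧ (∀ x y, d x y = d y x) ∧
    (∀ x y z, d x y ≤ max (d x z) (d z y))

/-- `B` is a ball of the ultrametric space `(X, d)`. -/
def IsBall (d : X → X → ℝ) (B : Finset X) : Prop :=
  ∃ x r, 0 ≤ r ∧ B = Finset.univ.filter (fun y => d x y ≤ r)

/-- `C` is a maximal proper subball of the ball `B`. -/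
def MaxSub (d : X → X → ℝ) (B C : Finset X) : Prop :=
  IsBall d C ∧ C ⊂ B ∧ ∀ D, IsBall d D → C ⊆ D → D ⊂ B → D = C

/-- The measure of a set: sum of the point masses `m`. -/
def nu (m : X → ℝ) (B : Finset X) : ℝ := ∑ x ∈ B, m x

/-- `Δν²(B) = ν(B)² - ∑_j ν(B_j)²` over the maximal proper subballs of `B`. -/
def dnu2 (d : X → X → ℝ) (m : X → ℝ) (B : Finset X) : ℝ :=
  nu m B ^ 2 - ∑ C ∈ Finset.univ.filter (MaxSub d B), nu m C ^ 2

/-- `Δν³(B) = ν(B)³ - ∑_j ν(B_j)³` over the maximal proper subballs of `B`. -/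
def dnu3 (d : X → X → ℝ) (m : X → ℝ) (B : Finset X) : ℝ :=
  nu m B ^ 3 - ∑ C ∈ Finset.univ.filter (MaxSub d B), nu m C ^ 3

/-- `sb x y` is the minimal ball containing the two points `x`, `y`. -/
def SupSpec (d : X → X → ℝ) (sb : X → X → Finset X) : Prop :=
  ∀ x y, IsBall d (sb x y) ∧ x ∈ sb x y ∧ y ∈ sb x y ∧
    ∀ B, IsBall d B → x ∈ B → y ∈ B → sb x y ⊆ B

/-- `pr L A` is the maximal proper subball of `L` containing the subball `A` (the
ball denoted `(L-1, A)` in the paper). -/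
def PredSpec (d : X → X → ℝ) (pr : Finset X → Finset X → Finset X) : Prop :=
  ∀ L A, IsBall d L → IsBall d A → A ⊂ L → MaxSub d L (pr L A) ∧ A ⊆ pr L A

variable {d : X → X → ℝ}

lemma singleton_isBall (hd : IsUltra d) (x : X) : IsBall d ({x} : Finset X) := by
  refine ⟨x, 0, le_refl 0, ?_⟩
  ext y
  simp only [Finset.mem_singleton, Finset.mem_filter, Finset.mem_univ, true_and]
  constructor
  · rintro rfl; exact le_of_eq ((hd.2.1 _ _).2 rfl)
  · intro h; exact ((hd.2.1 x y).1 (le_antisymm h (hd.1 x y))).symm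

lemma ball_comparable (hd : IsUltra d) {B C : Finset X} (hB : IsBall d B) (hC : IsBall d C)
    {z : X} (hzB : z ∈ B) (hzC : z ∈ C) : B ⊆ C ∨ C ⊆ B := by
  obtain ⟨x, r, hr, rfl⟩ := hB
  obtain ⟨y, s, hs, rfl⟩ := hC
  simp only [Finset.mem_filter, Finset.mem_univ, true_and] at hzB hzC
  rcases le_total r s with h | h
  · left; intro w hw
    simp only [Finset.mem_filter, Finset.mem_univ, true_and] at hw ⊢
    calc d y w ≤ max (d y z) (d z w) := hd.2.2.2 _ _ _
      _ ≤ max s (max (d z x) (d x w)) := by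
          exact max_le_max hzC (hd.2.2.2 _ _ _)
      _ ≤ s := by
          refine max_le le_rfl (max_le ?_ ?_)
          · rw [hd.2.2.1]; exact le_trans hzB h
          · exact le_trans hw h
  · right; intro w hw
    simp only [Finset.mem_filter, Finset.mem_univ, true_and] at hw ⊢
    calc d x w ≤ max (d x z) (d z w) := hd.2.2.2 _ _ _
      _ ≤ max r (max (d z y) (d y w)) := by
          exact max_le_max hzB (hd.2.2.2 _ _ _)
      _ ≤ r := by
          refine max_le le_rfl (max_le ?_ ?_)
          · rw [hd.2.2.1]; exact le_trans hzC h
          · exact le_trans hw h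

lemma exists_maxsub {C L : Finset X} (hC : IsBall d C) (hCL : C ⊂ L) :
    ∃ D, MaxSub d L D ∧ C ⊆ D := by
  classical
  set S : Finset (Finset X) :=
    Finset.univ.filter (fun D => IsBall d D ∧ C ⊆ D ∧ D ⊂ L) with hS
  have hCS : C ∈ S := by simp [hS, hC, hCL]
  obtain ⟨D, hDS, hDmax⟩ := Finset.exists_max_image S Finset.card ⟨C, hCS⟩
  simp only [hS, Finset.mem_filter, Finset.mem_univ, true_and] at hDS
  refine ⟨D, ⟨hDS.1, hDS.2.2, ?_⟩, hDS.2.1⟩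
  intro D' hD' hDD' hD'L
  have hD'S : D' ∈ S := by
    simp [hS, hD', hDS.2.1.trans hDD', hD'L]
  exact (Finset.eq_of_subset_of_card_le hDD' (hDmax D' hD'S)).symm

lemma maxsub_unique (hd : IsUltra d) {L D₁ D₂ : Finset X} (h1 : MaxSub d L D₁)
    (h2 : MaxSub d L D₂) {z : X} (hz1 : z ∈ D₁) (hz2 : z ∈ D₂) : D₁ = D₂ := by
  rcases ball_comparable hd h1.1 h2.1 hz1 hz2 with h | h
  · exact (h1.2.2 D₂ h2.1 h h2.2.1).symm
  · exact h2.2.2 D₁ h1.1 h h1.2.1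

lemma subball_subset_maxsub (hd : IsUltra d) {L C D : Finset X}
    (hC : IsBall d C) (hCL : C ⊂ L) (hD : MaxSub d L D) {z : X}
    (hzC : z ∈ C) (hzD : z ∈ D) : C ⊆ D := by
  obtain ⟨D', hD', hCD'⟩ := exists_maxsub hC hCL
  rw [← maxsub_unique hd hD' hD (hCD' hzC) hzD]
  exact hCD'

lemma sb_comm {sb : X → X → Finset X} (hsb : SupSpec d sb) (x y : X) :
    sb x y = sb y x := by
  apply subset_antisymm
  · exact (hsb x y).2.2.2 _ (hsb y x).1 (hsb y x).2.2.1 (hsb y x).2.1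
  · exact (hsb y x).2.2.2 _ (hsb x y).1 (hsb x y).2.2.1 (hsb x y).2.1

lemma sup_eq (hd : IsUltra d) {sb : X → X → Finset X} (hsb : SupSpec d sb)
    {L D : Finset X} (hL : IsBall d L) (hD : MaxSub d L D) {a x : X}
    (ha : a ∈ D) (hx : x ∈ L) (hxD : x ∉ D) : sb a x = L := by
  have haL : a ∈ L := hD.2.1.1 ha
  have h1 : sb a x ⊆ L := (hsb a x).2.2.2 L hL haL hx
  rcases h1.eq_or_ssubset with h | h
  · exact h
  · exact absurd ((subball_subset_maxsub hd (hsb a x).1 h hD (hsb a x).2.1 ha)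
      (hsb a x).2.2.1) hxD

/-- Product of replica matrices: off-diagonal case (`I ≠ J`, `M = sup(I,J)`). -/
theorem replica_product_offdiag (d : X → X → ℝ) (m : X → ℝ)
    (sb : X → X → Finset X) (pr : Finset X → Finset X → Finset X)
    (T₁ T₂ : Finset X → ℝ)
    (hd : IsUltra d) (hm : ∀ x, 0 < m x) (hsb : SupSpec d sb) (hpr : PredSpec d pr)
    (I J : X) (hIJ : I ≠ J) (M : Finset X) (hM : M = sb I J) :
    ∑ L ∈ Finset.univ.filter (fun L : X => L ≠ I ∧ L ≠ J),
        m L * T₁ (sb I L) * T₂ (sb L J)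
      = (∑ L ∈ Finset.univ.filter (fun L : Finset X => IsBall d L ∧ M ⊂ L),
            (nu m L - nu m (pr L M)) * T₁ L * T₂ L)
        + (∑ L ∈ Finset.univ.filter
              (fun L : Finset X => IsBall d L ∧ ({I} : Finset X) ⊂ L ∧ L ⊂ M),
            (nu m L - nu m (pr L {I})) * T₁ L * T₂ M)
        + (∑ L ∈ Finset.univ.filter
              (fun L : Finset X => IsBall d L ∧ ({J} : Finset X) ⊂ L ∧ L ⊂ M),
            (nu m L - nu m (pr L {J})) * T₁ M * T₂ L)
        + (nu m M - nu m (pr M {I}) - nu m (pr M {J})) * T₁ M * T₂ M := by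
  classical
  have hsbIJ := hsb I J
  have hMball : IsBall d M := hM ▸ hsbIJ.1
  have hIM : I ∈ M := hM ▸ hsbIJ.2.1
  have hJM : J ∈ M := hM ▸ hsbIJ.2.2.1
  have hMmin : ∀ B, IsBall d B → I ∈ B → J ∈ B → M ⊆ B := by
    intro B h1 h2 h3; rw [hM]; exact hsbIJ.2.2.2 B h1 h2 h3
  have hIball := singleton_isBall hd I
  have hJball := singleton_isBall hd J
  have hIMss : ({I} : Finset X) ⊂ M :=
    (Finset.ssubset_iff_of_subset (Finset.singleton_subset_iff.2 hIM)).2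
      ⟨J, hJM, by simp [Ne.symm hIJ]⟩
  have hJMss : ({J} : Finset X) ⊂ M :=
    (Finset.ssubset_iff_of_subset (Finset.singleton_subset_iff.2 hJM)).2
      ⟨I, hIM, by simp [hIJ]⟩
  obtain ⟨hPImax, hIPI'⟩ := hpr M {I} hMball hIball hIMss
  obtain ⟨hPJmax, hJPJ'⟩ := hpr M {J} hMball hJball hJMss
  set PI := pr M {I} with hPIdef
  set PJ := pr M {J} with hPJdef
  have hIPI : I ∈ PI := hIPI' (Finset.mem_singleton_self I)
  have hJPJ : J ∈ PJ := hJPJ' (Finset.mem_singleton_self J)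
  have hPIM : PI ⊆ M := hPImax.2.1.subset
  have hPJM : PJ ⊆ M := hPJmax.2.1.subset
  have hJPI : J ∉ PI := fun h => hPImax.2.1.not_subset (hMmin PI hPImax.1 hIPI h)
  have hIPJ : I ∉ PJ := fun h => hPJmax.2.1.not_subset (hMmin PJ hPJmax.1 h hJPJ)
  have hPIPJ : ∀ x, x ∈ PI → x ∉ PJ := fun x h1 h2 =>
    hJPI (maxsub_unique hd hPJmax hPImax h2 h1 ▸ hJPJ)
  -- key facts for x outside M
  have key1 : ∀ x, x ∉ M → M ⊂ sb I x ∧ sb x J = sb I x := by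
    intro x hx
    have hball := (hsb I x).1
    have hMsub : M ⊆ sb I x := by
      rcases ball_comparable hd hball hMball (hsb I x).2.1 hIM with h | h
      · exact absurd (h (hsb I x).2.2.1) hx
      · exact h
    have hss : M ⊂ sb I x :=
      hMsub.ssubset_of_ne (by intro h; rw [h] at hx; exact hx (hsb I x).2.2.1)
    refine ⟨hss, subset_antisymm ?_ ?_⟩
    · exact (hsb x J).2.2.2 _ hball (hsb I x).2.2.1 (hMsub hJM)
    · have hMxJ : M ⊆ sb x J := by
        rcases ball_comparable hd (hsb x J).1 hMball (hsb x J).2.2.1 hJM with h | h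
        · exact absurd (h (hsb x J).2.1) hx
        · exact h
      exact (hsb I x).2.2.2 _ (hsb x J).1 (hMxJ hIM) (hsb x J).2.1
  set S₁ : Finset X := Finset.univ.filter (fun x => x ∉ M) with hS₁
  set S₂ : Finset X := Finset.univ.filter (fun x => x ∈ PI ∧ x ≠ I) with hS₂
  set S₃ : Finset X := Finset.univ.filter (fun x => x ∈ PJ ∧ x ≠ J) with hS₃
  set S₄ : Finset X := Finset.univ.filter (fun x => x ∈ M ∧ x ∉ PI ∧ x ∉ PJ) with hS₄
  -- Sum 1
  have hsum1 : ∑ L ∈ Finset.univ.filter (fun L : Finset X => IsBall d L ∧ M ⊂ L),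
      (nu m L - nu m (pr L M)) * T₁ L * T₂ L
      = ∑ x ∈ S₁, m x * T₁ (sb I x) * T₂ (sb x J) := by
    have hmaps : ∀ x ∈ S₁, sb I x ∈
        Finset.univ.filter (fun L : Finset X => IsBall d L ∧ M ⊂ L) := by
      intro x hx
      simp only [hS₁, Finset.mem_filter, Finset.mem_univ, true_and] at hx ⊢
      exact ⟨(hsb I x).1, (key1 x hx).1⟩
    rw [← Finset.sum_fiberwise_of_maps_to hmaps
      (fun x => m x * T₁ (sb I x) * T₂ (sb x J))]
    refine Finset.sum_congr rfl ?_
    intro L hL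
    simp only [Finset.mem_filter, Finset.mem_univ, true_and] at hL
    obtain ⟨hLball, hML⟩ := hL
    obtain ⟨hprmax, hMpr⟩ := hpr L M hLball hMball hML
    have hfib : S₁.filter (fun x => sb I x = L) = L \ pr L M := by
      ext x
      simp only [hS₁, Finset.mem_filter, Finset.mem_univ, true_and, Finset.mem_sdiff]
      constructor
      · rintro ⟨hxM, rfl⟩
        refine ⟨(hsb I x).2.2.1, fun hxpr => ?_⟩
        exact absurd ((hsb I x).2.2.2 _ hprmax.1 (hMpr hIM) hxpr)
          hprmax.2.1.not_subset
      · rintro ⟨hxL, hxpr⟩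
        have hsup : sb I x = L := sup_eq hd hsb hLball hprmax (hMpr hIM) hxL hxpr
        exact ⟨fun hxM => hxpr (hMpr hxM), hsup⟩
    have hcong : ∀ x ∈ L \ pr L M,
        m x * T₁ (sb I x) * T₂ (sb x J) = m x * T₁ L * T₂ L := by
      intro x hx
      simp only [Finset.mem_sdiff] at hx
      have hsup : sb I x = L := sup_eq hd hsb hLball hprmax (hMpr hIM) hx.1 hx.2
      have hxM : x ∉ M := fun h => hx.2 (hMpr h)
      rw [(key1 x hxM).2, hsup]
    rw [hfib, Finset.sum_congr rfl hcong, ← Finset.sum_mul, ← Finset.sum_mul,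
        Finset.sum_sdiff_eq_sub hprmax.2.1.subset]
    rfl
  -- Sum 2
  have hsum2 : ∑ L ∈ Finset.univ.filter
      (fun L : Finset X => IsBall d L ∧ ({I} : Finset X) ⊂ L ∧ L ⊂ M),
      (nu m L - nu m (pr L {I})) * T₁ L * T₂ M
      = ∑ x ∈ S₂, m x * T₁ (sb I x) * T₂ (sb x J) := by
    have hmaps : ∀ x ∈ S₂, sb I x ∈ Finset.univ.filter
        (fun L : Finset X => IsBall d L ∧ ({I} : Finset X) ⊂ L ∧ L ⊂ M) := by
      intro x hx
      simp only [hS₂, Finset.mem_filter, Finset.mem_univ, true_and] at hx ⊢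
      have hsubPI : sb I x ⊆ PI := (hsb I x).2.2.2 _ hPImax.1 hIPI hx.1
      refine ⟨(hsb I x).1, ?_, Finset.ssubset_of_subset_of_ssubset hsubPI hPImax.2.1⟩
      refine (Finset.ssubset_iff_of_subset
        (Finset.singleton_subset_iff.2 (hsb I x).2.1)).2 ⟨x, (hsb I x).2.2.1, ?_⟩
      simp [hx.2]
    rw [← Finset.sum_fiberwise_of_maps_to hmaps
      (fun x => m x * T₁ (sb I x) * T₂ (sb x J))]
    refine Finset.sum_congr rfl ?_
    intro A hA
    simp only [Finset.mem_filter, Finset.mem_univ, true_and] at hA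
    obtain ⟨hAball, hIA, hAM⟩ := hA
    have hIA' : I ∈ A := hIA.subset (Finset.mem_singleton_self I)
    obtain ⟨hprA, hIprA⟩ := hpr A {I} hAball hIball hIA
    have hIpr : I ∈ pr A {I} := hIprA (Finset.mem_singleton_self I)
    have hAPI : A ⊆ PI := subball_subset_maxsub hd hAball hAM hPImax hIA' hIPI
    have hfib : S₂.filter (fun x => sb I x = A) = A \ pr A {I} := by
      ext x
      simp only [hS₂, Finset.mem_filter, Finset.mem_univ, true_and, Finset.mem_sdiff]
      constructor
      · rintro ⟨_, rfl⟩
        refine ⟨(hsb I x).2.2.1, fun hxpr => ?_⟩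
        exact absurd ((hsb I x).2.2.2 _ hprA.1 hIpr hxpr) hprA.2.1.not_subset
      · rintro ⟨hxA, hxpr⟩
        have hsup : sb I x = A := sup_eq hd hsb hAball hprA hIpr hxA hxpr
        exact ⟨⟨hAPI hxA, fun h => hxpr (h ▸ hIpr)⟩, hsup⟩
    have hcong : ∀ x ∈ A \ pr A {I},
        m x * T₁ (sb I x) * T₂ (sb x J) = m x * T₁ A * T₂ M := by
      intro x hx
      simp only [Finset.mem_sdiff] at hx
      have hsup : sb I x = A := sup_eq hd hsb hAball hprA hIpr hx.1 hx.2
      have hxJM : sb x J = M := sup_eq hd hsb hMball hPImax (hAPI hx.1) hJM hJPI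
      rw [hsup, hxJM]
    rw [hfib, Finset.sum_congr rfl hcong, ← Finset.sum_mul, ← Finset.sum_mul,
        Finset.sum_sdiff_eq_sub hprA.2.1.subset]
    rfl
  -- Sum 3
  have hsum3 : ∑ L ∈ Finset.univ.filter
      (fun L : Finset X => IsBall d L ∧ ({J} : Finset X) ⊂ L ∧ L ⊂ M),
      (nu m L - nu m (pr L {J})) * T₁ M * T₂ L
      = ∑ x ∈ S₃, m x * T₁ (sb I x) * T₂ (sb x J) := by
    have hmaps : ∀ x ∈ S₃, sb x J ∈ Finset.univ.filter
        (fun L : Finset X => IsBall d L ∧ ({J} : Finset X) ⊂ L ∧ L ⊂ M) := by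
      intro x hx
      simp only [hS₃, Finset.mem_filter, Finset.mem_univ, true_and] at hx ⊢
      have hsubPJ : sb x J ⊆ PJ := (hsb x J).2.2.2 _ hPJmax.1 hx.1 hJPJ
      refine ⟨(hsb x J).1, ?_, Finset.ssubset_of_subset_of_ssubset hsubPJ hPJmax.2.1⟩
      refine (Finset.ssubset_iff_of_subset
        (Finset.singleton_subset_iff.2 (hsb x J).2.2.1)).2 ⟨x, (hsb x J).2.1, ?_⟩
      simp [hx.2]
    rw [← Finset.sum_fiberwise_of_maps_to hmaps
      (fun x => m x * T₁ (sb I x) * T₂ (sb x J))]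
    refine Finset.sum_congr rfl ?_
    intro A hA
    simp only [Finset.mem_filter, Finset.mem_univ, true_and] at hA
    obtain ⟨hAball, hJA, hAM⟩ := hA
    have hJA' : J ∈ A := hJA.subset (Finset.mem_singleton_self J)
    obtain ⟨hprA, hJprA⟩ := hpr A {J} hAball hJball hJA
    have hJpr : J ∈ pr A {J} := hJprA (Finset.mem_singleton_self J)
    have hAPJ : A ⊆ PJ := subball_subset_maxsub hd hAball hAM hPJmax hJA' hJPJ
    have hfib : S₃.filter (fun x => sb x J = A) = A \ pr A {J} := by
      ext x
      simp only [hS₃, Finset.mem_filter, Finset.mem_univ, true_and, Finset.mem_sdiff]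
      constructor
      · rintro ⟨_, rfl⟩
        refine ⟨(hsb x J).2.1, fun hxpr => ?_⟩
        exact absurd ((hsb x J).2.2.2 _ hprA.1 hxpr hJpr) hprA.2.1.not_subset
      · rintro ⟨hxA, hxpr⟩
        have hsup : sb x J = A :=
          (sb_comm hsb x J).trans (sup_eq hd hsb hAball hprA hJpr hxA hxpr)
        exact ⟨⟨hAPJ hxA, fun h => hxpr (h ▸ hJpr)⟩, hsup⟩
    have hcong : ∀ x ∈ A \ pr A {J},
        m x * T₁ (sb I x) * T₂ (sb x J) = m x * T₁ M * T₂ A := by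
      intro x hx
      simp only [Finset.mem_sdiff] at hx
      have hsup : sb x J = A :=
        (sb_comm hsb x J).trans (sup_eq hd hsb hAball hprA hJpr hx.1 hx.2)
      have hxIM : sb I x = M :=
        (sb_comm hsb I x).trans (sup_eq hd hsb hMball hPJmax (hAPJ hx.1) hIM hIPJ)
      rw [hsup, hxIM]
    rw [hfib, Finset.sum_congr rfl hcong, ← Finset.sum_mul, ← Finset.sum_mul,
        Finset.sum_sdiff_eq_sub hprA.2.1.subset]
    rfl
  -- Sum 4
  have hsum4 : (nu m M - nu m PI - nu m PJ) * T₁ M * T₂ M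
      = ∑ x ∈ S₄, m x * T₁ (sb I x) * T₂ (sb x J) := by
    have hcong : ∀ x ∈ S₄,
        m x * T₁ (sb I x) * T₂ (sb x J) = m x * T₁ M * T₂ M := by
      intro x hx
      simp only [hS₄, Finset.mem_filter, Finset.mem_univ, true_and] at hx
      have h1 : sb I x = M := sup_eq hd hsb hMball hPImax hIPI hx.1 hx.2.1
      have h2 : sb x J = M :=
        (sb_comm hsb x J).trans (sup_eq hd hsb hMball hPJmax hJPJ hx.1 hx.2.2)
      rw [h1, h2]
    have hset : S₄ = M \ (PI ∪ PJ) := by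
      ext x
      simp only [hS₄, Finset.mem_filter, Finset.mem_univ, true_and, Finset.mem_sdiff,
        Finset.mem_union]
      tauto
    have hdisj : Disjoint PI PJ := Finset.disjoint_left.mpr (fun {a} h1 h2 => hPIPJ a h1 h2)
    have hsub : PI ∪ PJ ⊆ M := Finset.union_subset hPIM hPJM
    rw [Finset.sum_congr rfl hcong, ← Finset.sum_mul, ← Finset.sum_mul, hset,
        Finset.sum_sdiff_eq_sub hsub, Finset.sum_union hdisj]
    simp only [nu]
    ring
  -- Partition of the LHS
  have hpart : Finset.univ.filter (fun L : X => L ≠ I ∧ L ≠ J)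
      = S₁ ∪ (S₂ ∪ (S₃ ∪ S₄)) := by
    ext x
    simp only [hS₁, hS₂, hS₃, hS₄, Finset.mem_filter, Finset.mem_univ, true_and,
      Finset.mem_union]
    constructor
    · rintro ⟨hxI, hxJ⟩
      by_cases hxM : x ∈ M
      · by_cases hxPI : x ∈ PI
        · exact Or.inr (Or.inl ⟨hxPI, hxI⟩)
        · by_cases hxPJ : x ∈ PJ
          · exact Or.inr (Or.inr (Or.inl ⟨hxPJ, hxJ⟩))
          · exact Or.inr (Or.inr (Or.inr ⟨hxM, hxPI, hxPJ⟩))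
      · exact Or.inl hxM
    · rintro (h | ⟨h1, h2⟩ | ⟨h1, h2⟩ | ⟨h1, h2, h3⟩)
      · exact ⟨fun hh => h (hh ▸ hIM), fun hh => h (hh ▸ hJM)⟩
      · exact ⟨h2, fun hh => hJPI (hh ▸ h1)⟩
      · exact ⟨fun hh => hIPJ (hh ▸ h1), h2⟩
      · exact ⟨fun hh => h2 (hh ▸ hIPI), fun hh => h3 (hh ▸ hJPJ)⟩
  have hd1 : Disjoint S₁ (S₂ ∪ (S₃ ∪ S₄)) := by
    rw [Finset.disjoint_left]
    intro a ha hb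
    simp only [hS₁, hS₂, hS₃, hS₄, Finset.mem_filter, Finset.mem_univ, true_and,
      Finset.mem_union] at ha hb
    rcases hb with h | h | h
    · exact ha (hPIM h.1)
    · exact ha (hPJM h.1)
    · exact ha h.1
  have hd2 : Disjoint S₂ (S₃ ∪ S₄) := by
    rw [Finset.disjoint_left]
    intro a ha hb
    simp only [hS₂, hS₃, hS₄, Finset.mem_filter, Finset.mem_univ, true_and,
      Finset.mem_union] at ha hb
    rcases hb with h | h
    · exact hPIPJ a ha.1 h.1
    · exact h.2.1 ha.1
  have hd3 : Disjoint S₃ S₄ := by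
    rw [Finset.disjoint_left]
    intro a ha hb
    simp only [hS₃, hS₄, Finset.mem_filter, Finset.mem_univ, true_and] at ha hb
    exact hb.2.2 ha.1
  rw [hpart, Finset.sum_union hd1, Finset.sum_union hd2, Finset.sum_union hd3,
      hsum1, hsum2, hsum3, hsum4]
  ring
end
end

section
/- Let X be a finite ultrametric space with positive additive measure ν, tree of balls S with maximal ball K, S_min the points, and T_1, T_2 : S \ S_min → ℝ. For any point I, the diagonal matrix product satisfies Σ_{L ∈ S_min, L ≠ I} ν(L)·T_1(sup(I,L))·T_2(sup(L,I)) = Σ_{L : I < L ≤ K} (ν(L) − ν(L−1,I))·T_1(L)·T_2(L). -/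
open scoped Classical
open Finset

noncomputable section

variable {X : Type*} [Fintype X] [DecidableEq X]

lemma ball_recenter {d : X → X → ℝ} (hd : IsUltra d) (x : X) (r : ℝ) {I : X}
    (hI : I ∈ Finset.univ.filter (fun y => d x y ≤ r)) :
    Finset.univ.filter (fun y => d x y ≤ r) = Finset.univ.filter (fun y => d I y ≤ r) := by
  obtain ⟨hnn, hzero, hsymm, htri⟩ := hd
  simp only [mem_filter, mem_univ, true_and] at hI
  ext y
  simp only [mem_filter, mem_univ, true_and]
  constructor
  · intro h
    exact le_trans (htri I y x) (max_le (by rw [hsymm]; exact hI) h)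
  · intro h
    exact le_trans (htri x y I) (max_le hI h)

lemma balls_comparable {d : X → X → ℝ} (hd : IsUltra d) {B C : Finset X}
    (hB : IsBall d B) (hC : IsBall d C) {I : X} (hIB : I ∈ B) (hIC : I ∈ C) :
    B ⊆ C ∨ C ⊆ B := by
  obtain ⟨x, r, hr, rfl⟩ := hB
  obtain ⟨x', r', hr', rfl⟩ := hC
  rw [ball_recenter hd x r hIB, ball_recenter hd x' r' hIC]
  rcases le_total r r' with h | h
  · left; intro y hy; simp only [mem_filter, mem_univ, true_and] at *; exact hy.trans h
  · right; intro y hy; simp only [mem_filter, mem_univ, true_and] at *; exact hy.trans h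

lemma singleton_ball {d : X → X → ℝ} (hd : IsUltra d) (I : X) : IsBall d ({I} : Finset X) := by
  obtain ⟨hnn, hzero, hsymm, htri⟩ := hd
  refine ⟨I, 0, le_refl 0, ?_⟩
  ext y
  simp only [mem_singleton, mem_filter, mem_univ, true_and]
  constructor
  · intro h; rw [h]; exact le_of_eq ((hzero I I).2 rfl)
  · intro h; exact ((hzero I y).1 (le_antisymm h (hnn I y))).symm


/-- Product of replica matrices: diagonal case. -/
theorem replica_product_diag (d : X → X → ℝ) (m : X → ℝ)
    (sb : X → X → Finset X) (pr : Finset X → Finset X → Finset X)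
    (T₁ T₂ : Finset X → ℝ)
    (hd : IsUltra d) (hm : ∀ x, 0 < m x) (hsb : SupSpec d sb) (hpr : PredSpec d pr)
    (I : X) :
    ∑ L ∈ Finset.univ.filter (fun L : X => L ≠ I),
        m L * T₁ (sb I L) * T₂ (sb L I)
      = ∑ L ∈ Finset.univ.filter (fun L : Finset X => IsBall d L ∧ ({I} : Finset X) ⊂ L),
          (nu m L - nu m (pr L {I})) * T₁ L * T₂ L := by
  have hsbsymm : ∀ L, sb L I = sb I L := by
    intro L
    obtain ⟨hb1, hx1, hy1, hmin1⟩ := hsb I L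
    obtain ⟨hb2, hx2, hy2, hmin2⟩ := hsb L I
    exact subset_antisymm (hmin2 _ hb1 hy1 hx1) (hmin1 _ hb2 hy2 hx2)
  have hmaps : ∀ L ∈ Finset.univ.filter (fun L : X => L ≠ I),
      sb I L ∈ Finset.univ.filter (fun L : Finset X => IsBall d L ∧ ({I} : Finset X) ⊂ L) := by
    intro L hL
    simp only [mem_filter, mem_univ, true_and] at hL ⊢
    obtain ⟨hb, hI, hLm, _⟩ := hsb I L
    refine ⟨hb, ?_, ?_⟩
    · exact Finset.singleton_subset_iff.2 hI
    · intro hsub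
      exact hL (Finset.mem_singleton.1 (hsub hLm))
  rw [← Finset.sum_fiberwise_of_maps_to hmaps]
  refine Finset.sum_congr rfl ?_
  intro B hB0
  simp only [mem_filter, mem_univ, true_and] at hB0
  obtain ⟨hB, hIB⟩ := hB0
  have hIinB : I ∈ B := hIB.1 (Finset.mem_singleton_self I)
  obtain ⟨⟨hprBall, hprSub, hprMax⟩, hIpr⟩ := hpr B {I} hB (singleton_ball hd I) hIB
  have hIinpr : I ∈ pr B {I} := hIpr (Finset.mem_singleton_self I)
  have hfiber : (Finset.univ.filter (fun L : X => L ≠ I)).filter (fun L => sb I L = B)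
      = B \ pr B {I} := by
    ext L
    simp only [Finset.mem_filter, Finset.mem_univ, true_and, Finset.mem_sdiff]
    constructor
    · rintro ⟨hLI, hLB⟩
      obtain ⟨hb, hI, hLm, hmin⟩ := hsb I L
      refine ⟨hLB ▸ hLm, ?_⟩
      intro hLpr
      have : sb I L ⊆ pr B {I} := hmin _ hprBall hIinpr hLpr
      exact hprSub.not_subset (hLB ▸ this)
    · rintro ⟨hLB, hLnpr⟩
      obtain ⟨hb, hI, hLm, hmin⟩ := hsb I L
      have hLI : L ≠ I := fun h => hLnpr (h ▸ hIinpr)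
      refine ⟨hLI, ?_⟩
      have hsub : sb I L ⊆ B := hmin B hB hIinB hLB
      rcases balls_comparable hd hb hprBall hI hIinpr with hc | hc
      · exact absurd (hc hLm) hLnpr
      · by_cases heq : sb I L = B
        · exact heq
        · have hss : sb I L ⊂ B := ⟨hsub, fun hh => heq (subset_antisymm hsub hh)⟩
          have := hprMax (sb I L) hb hc hss
          exact absurd (this ▸ hLm) hLnpr
  calc ∑ L ∈ (Finset.univ.filter (fun L : X => L ≠ I)).filter (fun L => sb I L = B),
          m L * T₁ (sb I L) * T₂ (sb L I)
      = ∑ L ∈ (Finset.univ.filter (fun L : X => L ≠ I)).filter (fun L => sb I L = B),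
          m L * T₁ B * T₂ B := by
        refine Finset.sum_congr rfl ?_
        intro L hL
        simp only [Finset.mem_filter] at hL
        rw [hsbsymm L, hL.2]
    _ = (∑ L ∈ B \ pr B {I}, m L) * T₁ B * T₂ B := by
        rw [hfiber, ← Finset.sum_mul, ← Finset.sum_mul]
    _ = (nu m B - nu m (pr B {I})) * T₁ B * T₂ B := by
        rw [Finset.sum_sdiff_eq_sub hprSub.subset]; rfl
end
end
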